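/- arXiv:2605.27876 — 4 statements merged into one kernel-verified Lean document; each statement's English description precedes it below -/
import Mathlib

section
/- Let q ∈ ℂ with q ≠ 0, 1, let f be a polynomial over ℂ, let n ∈ ℕ, and let z₀ ∈ ℂ with z₀ ≠ 0. Then the following are equivalent: (i) D_q^k f(z₀) = 0 for all 0 ≤ k < n and D_q^n f(z₀) ≠ 0; (ii) f(q^k z₀) = 0 for all 0 ≤ k < n and f(q^n z₀) ≠ 0. -/
open Polynomial

noncomputable section

/-- q-number [n]_q = 1 + q + ... + q^{n-1}. -/
def qNum (q : ℂ) (n : ℕ) : ℂ := ∑ i ∈ Finset.range n, q ^ i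

/-- q-factorial. -/
def qFact (q : ℂ) (n : ℕ) : ℂ := ∏ i ∈ Finset.range n, qNum q (i + 1)

/-- q-binomial coefficient. -/
def qBinom (q : ℂ) (k j : ℕ) : ℂ := qFact q k / (qFact q j * qFact q (k - j))

/-- q-derivative of a function. -/
def Dqf (q : ℂ) (f : ℂ → ℂ) : ℂ → ℂ := fun z => (f (q * z) - f z) / (q * z - z)

/-- q-analogue of the power (z-w)^n : [z-w]_q^n = (z-w)(z-qw)...(z-q^{n-1}w). -/
def qPow (q w : ℂ) (n : ℕ) : Polynomial ℂ := ∏ i ∈ Finset.range n, (X - C (q ^ i * w))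

/-- q-derivative as a polynomial operation. -/
def qDeriv (q : ℂ) (f : Polynomial ℂ) : Polynomial ℂ :=
  C (q - 1)⁻¹ * ((f.comp (C q * X) - f) /ₘ X)

/-- `w` is a zero of `f` with q-weight `n`. -/
def IsZeroQWeight (q : ℂ) (f : Polynomial ℂ) (w : ℂ) (n : ℕ) : Prop :=
  (w = 0 ∧ f ≠ 0 ∧ Polynomial.rootMultiplicity 0 f = n) ∨
  (w ≠ 0 ∧ (∀ k < n, f.eval (q ^ k * w) = 0) ∧ f.eval (q ^ n * w) ≠ 0)

/-- Canonical q-chain factorization of a polynomial. -/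
structure QFactorization (q : ℂ) (P : Polynomial ℂ) where
  N : ℕ
  z : Fin N → ℂ
  n : Fin N → ℕ
  A : ℂ
  A_ne : A ≠ 0
  n_pos : ∀ j, 1 ≤ n j
  eq : P = Polynomial.C A * ∏ j, qPow q (z j) (n j)
  deg_sum : ∑ j, n j = P.natDegree
  chain : ∀ j : Fin N,
    IsZeroQWeight q (∏ k ∈ Finset.univ.filter (fun k => j ≤ k), qPow q (z k) (n k)) (z j) (n j)
  maximal : ∀ j : Fin N, z j ≠ 0 →
    (∏ k ∈ Finset.univ.filter (fun k => j ≤ k), qPow q (z k) (n k)).eval (q⁻¹ * z j) ≠ 0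

/-- q-difference radical associated to a canonical factorization. -/
def radQ {q : ℂ} {P : Polynomial ℂ} (F : QFactorization q P) : Polynomial ℂ :=
  ∏ j, (X - C (F.z j))

local instance : DecidableEq (Polynomial ℂ) := Classical.decEq _

/-- Truncated q-radical of level μ. -/
def radTruncQ {q : ℂ} {P : Polynomial ℂ} (F : QFactorization q P) (μ : ℕ) : Polynomial ℂ :=
  EuclideanDomain.gcd (∏ j, qPow q (F.z j) (F.n j)) (∏ j, qPow q (F.z j) μ)

/-- f and g have a nonconstant common q-divisor. -/
def HasCommonQDivisor (q : ℂ) (f g : Polynomial ℂ) : Prop :=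
  ∃ (z₀ z₁ z₂ : ℂ) (m n : ℕ) (F G : Polynomial ℂ), 1 ≤ m ∧ 1 ≤ n ∧
    f = qPow q z₁ m * F ∧ g = qPow q z₂ n * G ∧ (z₀ = z₁ ∨ z₀ = z₂) ∧
    f * g = qPow q z₀ (m + n) * (F * G)

/-- q-shifted power [P]_q^n(z) = P(z)P(qz)...(P(q^{n-1}z)). -/
def qShiftPow (q : ℂ) (P : Polynomial ℂ) (n : ℕ) : Polynomial ℂ :=
  ∏ i ∈ Finset.range n, P.comp (C (q ^ i) * X)

/-- gcd of a list of polynomials. -/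
def gcdList (l : List (Polynomial ℂ)) : Polynomial ℂ := l.foldr EuclideanDomain.gcd 0
/-- Leading coefficient in the q-derivative chain. -/
def qwCoef (q : ℂ) : ℕ → ℂ
  | 0 => 1
  | (k+1) => qwCoef q k * (q ^ k)⁻¹ / (q - 1)

lemma qwCoef_ne (q : ℂ) (hq0 : q ≠ 0) (hq1 : q ≠ 1) : ∀ k, qwCoef q k ≠ 0 := by
  intro k
  induction k with
  | zero => simp [qwCoef]
  | succ k ih =>
    have h1 : q - 1 ≠ 0 := sub_ne_zero.mpr hq1
    have h2 : (q ^ k : ℂ) ≠ 0 := pow_ne_zero _ hq0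
    simp only [qwCoef]
    exact div_ne_zero (mul_ne_zero ih (inv_ne_zero h2)) h1

lemma qw_key (q : ℂ) (hq0 : q ≠ 0) (hq1 : q ≠ 1) (f : Polynomial ℂ) :
    ∀ (k : ℕ) (z : ℂ), z ≠ 0 → (∀ j < k, f.eval (q ^ j * z) = 0) →
      ((Dqf q)^[k] (fun z => f.eval z)) z = qwCoef q k / z ^ k * f.eval (q ^ k * z) := by
  intro k
  induction k with
  | zero => intro z hz h; simp [qwCoef]
  | succ k ih =>
    intro z hz h
    have hqz : q * z ≠ 0 := mul_ne_zero hq0 hz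
    rw [Function.iterate_succ_apply']
    have h1 : ((Dqf q)^[k] (fun z => f.eval z)) (q * z)
        = qwCoef q k / (q * z) ^ k * f.eval (q ^ k * (q * z)) := by
      apply ih _ hqz
      intro j hj
      have : q ^ j * (q * z) = q ^ (j + 1) * z := by ring
      rw [this]
      exact h (j + 1) (by omega)
    have h2 : ((Dqf q)^[k] (fun z => f.eval z)) z = 0 := by
      rw [ih _ hz (fun j hj => h j (by omega)), h k (by omega)]
      simp
    have hE : q ^ k * (q * z) = q ^ (k + 1) * z := by ring
    rw [Dqf, h1, h2, hE]
    have h3 : q - 1 ≠ 0 := sub_ne_zero.mpr hq1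
    have h4 : (q ^ k : ℂ) ≠ 0 := pow_ne_zero _ hq0
    simp only [qwCoef]
    rw [sub_zero, show q * z - z = (q - 1) * z from by ring]
    field_simp
    ring_nf

/-- q-weight via iterated q-derivatives ↔ vanishing along the q-chain. -/
theorem qWeight_iff_chain (q : ℂ) (hq0 : q ≠ 0) (hq1 : q ≠ 1) (f : Polynomial ℂ) (n : ℕ)
    (z₀ : ℂ) (hz : z₀ ≠ 0) :
    ((∀ k < n, ((Dqf q)^[k] (fun z => f.eval z)) z₀ = 0) ∧
        ((Dqf q)^[n] (fun z => f.eval z)) z₀ ≠ 0)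
    ↔ ((∀ k < n, f.eval (q ^ k * z₀) = 0) ∧ f.eval (q ^ n * z₀) ≠ 0) := by
  have hc := qwCoef_ne q hq0 hq1
  constructor
  · rintro ⟨h1, h2⟩
    have H : ∀ k < n, f.eval (q ^ k * z₀) = 0 := by
      intro k
      induction k using Nat.strong_induction_on with
      | _ k ih =>
        intro hk
        have := qw_key q hq0 hq1 f k z₀ hz (fun j hj => ih j hj (by omega))
        rw [h1 k hk] at this
        have h0 : qwCoef q k / z₀ ^ k * f.eval (q ^ k * z₀) = 0 := this.symm
        rcases mul_eq_zero.mp h0 with h | h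
        · exact absurd h (div_ne_zero (hc k) (pow_ne_zero _ hz))
        · exact h
    refine ⟨H, ?_⟩
    intro hcon
    apply h2
    rw [qw_key q hq0 hq1 f n z₀ hz H, hcon, mul_zero]
  · rintro ⟨H, H2⟩
    constructor
    · intro k hk
      rw [qw_key q hq0 hq1 f k z₀ hz (fun j hj => H j (by omega)), H k hk, mul_zero]
    · rw [qw_key q hq0 hq1 f n z₀ hz H]
      exact mul_ne_zero (div_ne_zero (hc n) (pow_ne_zero _ hz)) H2
end
end

section
/- Every nonzero polynomial P over ℂ of degree p ≥ 1 can be written as P(z) = A · ∏_{j=1}^{N} [z - z_j]_q^{n_j}, where A ∈ ℂ is a nonzero constant, z_j ∈ ℂ, n_j ∈ ℕ with n_j ≥ 1, n_1 + ⋯ + n_N = p, each [z - z_j]_q^{n_j} = (z - z_j)(z - q z_j)⋯(z - q^{n_j - 1} z_j), and for each j, z_j is a zero of ∏_{k=j}^{N}[z - z_k]_q^{n_k} with q-weight n_j satisfying the non-extendability condition that q^{-1}z_j is not a zero of ∏_{k=j}^{N}[z - z_k]_q^{n_k} (here q ∈ ℂ, 0 < |q|, |q| ≠ 1). -/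
open Polynomial

noncomputable section

/-! Among the nonzero roots of `P` there is one, `w`, with `q⁻¹ * w` not a root: otherwise the
finite set of nonzero roots would contain the infinite orbit `q⁻ᵏ * w`. For the same reason the
q-chain `w, q w, q² w, …` leaves the roots after some `n ≥ 1` steps, and since its points are
distinct, `qPow q w n` divides `P`. Peeling off this factor and recursing on the quotient
eventually leaves a polynomial whose only root is `0`, that is `a * X ^ d`, which is the q-power
of weight `d` at `0`. -/

lemma qPow_monic (q w : ℂ) (n : ℕ) : (qPow q w n).Monic :=
  monic_prod_of_monic _ _ fun _ _ => monic_X_sub_C _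

lemma qPow_ne_zero (q w : ℂ) (n : ℕ) : qPow q w n ≠ 0 :=
  (qPow_monic q w n).ne_zero

@[simp]
lemma natDegree_qPow (q w : ℂ) (n : ℕ) : (qPow q w n).natDegree = n := by
  rw [qPow, natDegree_prod_of_monic _ _ fun _ _ => monic_X_sub_C _]
  simp only [natDegree_X_sub_C, Finset.sum_const, Finset.card_range, smul_eq_mul, mul_one]

lemma qPow_base_zero (q : ℂ) (n : ℕ) : qPow q 0 n = X ^ n := by
  simp [qPow]

lemma eval_qPow_pow_mul (q w : ℂ) {k n : ℕ} (hk : k < n) : (qPow q w n).eval (q ^ k * w) = 0 := by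
  rw [qPow, eval_prod]
  exact Finset.prod_eq_zero (Finset.mem_range.2 hk) (by simp)

lemma pow_mul_injective_of_norm_ne_one {𝕜 : Type*} [NormedDivisionRing 𝕜] {q w : 𝕜}
    (hq0 : q ≠ 0) (habs : ‖q‖ ≠ 1) (hw : w ≠ 0) : Function.Injective fun k : ℕ => q ^ k * w := by
  intro i j hij
  apply pow_right_injective₀ (norm_pos_iff.2 hq0) habs
  simpa only [norm_pow] using congrArg norm (mul_right_cancel₀ hw hij)

section Roots

variable {q w : ℂ} {P : ℂ[X]}

lemma qPow_dvd_of_isRoot (hq0 : q ≠ 0) (habs : ‖q‖ ≠ 1) (hw : w ≠ 0) {n : ℕ}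
    (hroot : ∀ k < n, P.IsRoot (q ^ k * w)) : qPow q w n ∣ P :=
  Finset.prod_dvd_of_coprime
    ((pairwise_coprime_X_sub_C (pow_mul_injective_of_norm_ne_one hq0 habs hw)).set_pairwise _)
    fun k hk => dvd_iff_isRoot.2 (hroot k (Finset.mem_range.1 hk))

lemma exists_qChain_weight (hq0 : q ≠ 0) (habs : ‖q‖ ≠ 1) (hw : w ≠ 0) (hP : P ≠ 0) :
    ∃ n, (∀ k < n, P.IsRoot (q ^ k * w)) ∧ ¬ P.IsRoot (q ^ n * w) := by
  have hend : ∃ n, ¬ P.IsRoot (q ^ n * w) := by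
    by_contra! h
    exact Set.infinite_of_injective_forall_mem (pow_mul_injective_of_norm_ne_one hq0 habs hw) h
      (finite_setOfPred_isRoot hP)
  exact ⟨Nat.find hend, fun k hk => not_not.1 (Nat.find_min hend hk), Nat.find_spec hend⟩

lemma exists_isRoot_not_isRoot_inv_mul (hq0 : q ≠ 0) (habs : ‖q‖ ≠ 1) (hP : P ≠ 0)
    (hroot : ∃ x, P.IsRoot x ∧ x ≠ 0) : ∃ w, w ≠ 0 ∧ P.IsRoot w ∧ ¬ P.IsRoot (q⁻¹ * w) := by
  by_contra! hclosed
  obtain ⟨x, hx, hx0⟩ := hroot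
  have horbit : ∀ k : ℕ, q⁻¹ ^ k * x ∈ {y | P.IsRoot y} := by
    intro k
    induction k with
    | zero => simpa using hx
    | succ k ih =>
      rw [pow_succ', mul_assoc]
      exact hclosed _ (mul_ne_zero (pow_ne_zero _ (inv_ne_zero hq0)) hx0) ih
  have hinv : ‖q⁻¹‖ ≠ 1 := by rwa [norm_inv, inv_ne_one]
  exact Set.infinite_of_injective_forall_mem
    (pow_mul_injective_of_norm_ne_one (inv_ne_zero hq0) hinv hx0) horbit (finite_setOfPred_isRoot hP)

end Roots

lemma eq_C_mul_X_pow_of_forall_isRoot_eq_zero {k : Type*} [Field k] [IsAlgClosed k] {P : k[X]}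
    (hP : P ≠ 0) (h : ∀ x, P.IsRoot x → x = 0) : P = C P.leadingCoeff * X ^ P.natDegree := by
  have hroots : P.roots = Multiset.replicate P.natDegree 0 :=
    Multiset.eq_replicate.2 ⟨IsAlgClosed.card_roots_eq_natDegree,
      fun x hx => h x ((mem_roots hP).1 hx)⟩
  conv_lhs => rw [← C_leadingCoeff_mul_prod_multiset_X_sub_C (p := P)
    IsAlgClosed.card_roots_eq_natDegree]
  simp [hroots]

lemma Fin.prod_filter_succ_le {M : Type*} [CommMonoid M] {N : ℕ} (f : Fin (N + 1) → M)
    (j : Fin N) :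
    ∏ k ∈ Finset.univ.filter (fun k => j.succ ≤ k), f k
      = ∏ k ∈ Finset.univ.filter (fun k => j ≤ k), f k.succ := by
  simp [Finset.prod_filter, Fin.prod_univ_succ, Fin.succ_le_succ_iff]

namespace QFactorization

variable {q : ℂ} {P : ℂ[X]}

def qProd (F : QFactorization q P) : ℂ[X] := ∏ j, qPow q (F.z j) (F.n j)

lemma eval_eq_zero_iff (F : QFactorization q P) (x : ℂ) : P.eval x = 0 ↔ F.qProd.eval x = 0 := by
  conv_lhs => rw [F.eq]
  rw [eval_mul, eval_C, mul_eq_zero, or_iff_right F.A_ne]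
  rfl

lemma ne_zero (F : QFactorization q P) : P ≠ 0 := by
  rw [F.eq]
  exact mul_ne_zero (C_ne_zero.2 F.A_ne) (monic_prod_of_monic _ _ fun j _ => qPow_monic _ _ _).ne_zero

def ofConst (a : ℂ) (ha : a ≠ 0) : QFactorization q (C a) where
  N := 0
  z := Fin.elim0
  n := Fin.elim0
  A := a
  A_ne := ha
  n_pos j := j.elim0
  eq := by simp
  deg_sum := by simp
  chain j := j.elim0
  maximal j := j.elim0

def cons (F : QFactorization q P) (w : ℂ) (n : ℕ) (hn : 1 ≤ n)
    (hchain : IsZeroQWeight q (qPow q w n * F.qProd) w n)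
    (hmax : w ≠ 0 → (qPow q w n * F.qProd).eval (q⁻¹ * w) ≠ 0) :
    QFactorization q (qPow q w n * P) where
  N := F.N + 1
  z := Fin.cons w F.z
  n := Fin.cons n F.n
  A := F.A
  A_ne := F.A_ne
  n_pos := Fin.cases hn F.n_pos
  eq := by
    conv_lhs => rw [F.eq]
    rw [Fin.prod_univ_succ]
    simp only [Fin.cons_zero, Fin.cons_succ]
    ring
  deg_sum := by
    rw [Fin.sum_univ_succ, natDegree_mul (qPow_ne_zero q w n) F.ne_zero, natDegree_qPow]
    simp [F.deg_sum]
  chain := by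
    refine Fin.cases ?_ fun j => ?_
    · simpa [Fin.prod_univ_succ, qProd] using hchain
    · simpa only [Fin.prod_filter_succ_le, Fin.cons_succ] using F.chain j
  maximal := by
    refine Fin.cases ?_ fun j hj => ?_
    · simpa [Fin.prod_univ_succ, qProd] using hmax
    · simpa only [Fin.prod_filter_succ_le, Fin.cons_succ] using F.maximal j hj

end QFactorization

lemma nonempty_qFactorization_of_forall_isRoot_eq_zero (q : ℂ) {P : ℂ[X]} (hP : P ≠ 0)
    (h : ∀ x, P.IsRoot x → x = 0) : Nonempty (QFactorization q P) := by
  have hlc : P.leadingCoeff ≠ 0 := leadingCoeff_ne_zero.2 hP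
  rcases Nat.eq_zero_or_pos P.natDegree with hd | hd
  · rw [eq_C_of_natDegree_eq_zero hd]
    exact ⟨QFactorization.ofConst _ (by rwa [← coeff_natDegree, hd] at hlc)⟩
  rw [eq_C_mul_X_pow_of_forall_isRoot_eq_zero hP h, mul_comm, ← qPow_base_zero q]
  have hprod : (QFactorization.ofConst (q := q) _ hlc).qProd = 1 := Fin.prod_univ_zero _
  exact ⟨(QFactorization.ofConst _ hlc).cons 0 _ hd
    (Or.inl ⟨rfl, by simp [hprod, qPow_base_zero], by
      simpa [hprod, qPow_base_zero] using rootMultiplicity_X_sub_C_pow (0 : ℂ) P.natDegree⟩)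
    fun h0 => absurd rfl h0⟩

theorem exists_qFactorization_general (q : ℂ) (hq0 : q ≠ 0) (habs : ‖q‖ ≠ 1)
    (P : Polynomial ℂ) (hP : P ≠ 0) :
    Nonempty (QFactorization q P) := by
  induction hd : P.natDegree using Nat.strong_induction_on generalizing P with
  | _ d ih =>
  by_cases hzero : ∀ x, P.IsRoot x → x = 0
  · exact nonempty_qFactorization_of_forall_isRoot_eq_zero q hP hzero
  push Not at hzero
  obtain ⟨w, hw, hroot, hinv⟩ := exists_isRoot_not_isRoot_inv_mul hq0 habs hP hzero
  obtain ⟨n, hchain, hend⟩ := exists_qChain_weight hq0 habs hw hP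
  have hn : 1 ≤ n := Nat.one_le_iff_ne_zero.2 fun h0 => hend (by simpa [h0] using hroot)
  obtain ⟨P', rfl⟩ := qPow_dvd_of_isRoot hq0 habs hw hchain
  have hP' : P' ≠ 0 := right_ne_zero_of_mul hP
  obtain ⟨F⟩ := ih P'.natDegree (by simp [← hd, natDegree_mul (qPow_ne_zero q w n) hP']; omega)
    P' hP' rfl
  have heval : ∀ x, (qPow q w n * P').eval x = 0 ↔ (qPow q w n * F.qProd).eval x = 0 := by
    simp [eval_mul, F.eval_eq_zero_iff]
  exact ⟨F.cons w n hn
    (Or.inr ⟨hw, fun k hk => by simp [eval_qPow_pow_mul q w hk], (heval _).not.1 hend⟩)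
    fun _ => (heval _).not.1 hinv⟩

/-- Existence of the canonical q-chain factorization. -/
theorem exists_qFactorization (q : ℂ) (hq0 : q ≠ 0) (habs : ‖q‖ ≠ 1)
    (P : Polynomial ℂ) (hP : P ≠ 0) (hdeg : 1 ≤ P.natDegree) :
    Nonempty (QFactorization q P) :=
  exists_qFactorization_general q hq0 habs P hP
end
end

section
/- Let q ∈ ℂ \ {0} with |q| ≠ 1, and let f_1, ..., f_m be polynomials over ℂ. The q-Casorati determinant W_q(f_1,...,f_m) vanishes identically if and only if f_1, ..., f_m are linearly dependent over ℂ (equivalently, over the field of q-periodic functions π with π(qz) = π(z), which for polynomial entries reduces to constants). -/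
open Polynomial

noncomputable section

/-! `D_q^i g (z)` is a combination of `g z, g (q z), …, g (q^i z)` whose triangular coefficient
array has a diagonal that does not vanish for `z ≠ 0`. Hence, for `z ≠ 0`, the q-Casorati
determinant of `f` is a nonzero multiple of the value at `z` of the polynomial `det (f_j (q^i X))`.
Column operations preserve this polynomial and the linear independence of `f`, and bring an
independent family to pairwise distinct degrees `d_j`; the coefficient of `X ^ (∑ d_j)` is then
`∏ lc (f_j)` times the Vandermonde determinant of the `q ^ d_j`, nonzero because `|q| ≠ 1` makes
`n ↦ q ^ n` injective. -/

theorem Polynomial.coeff_prod_sum_of_natDegree_le {ι R : Type*} [CommSemiring R] (s : Finset ι)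
    (f : ι → R[X]) (d : ι → ℕ) (h : ∀ i ∈ s, (f i).natDegree ≤ d i) :
    (∏ i ∈ s, f i).coeff (∑ i ∈ s, d i) = ∏ i ∈ s, (f i).coeff (d i) := by
  classical
  induction s using Finset.induction_on with
  | empty => simp
  | insert a s ha ih =>
    rw [Finset.prod_insert ha, Finset.sum_insert ha, Finset.prod_insert ha,
      coeff_mul_add_eq_of_natDegree_le (h a (Finset.mem_insert_self a s))
        ((natDegree_prod_le _ _).trans
          (Finset.sum_le_sum fun i hi => h i (Finset.mem_insert_of_mem hi))),
      ih fun i hi => h i (Finset.mem_insert_of_mem hi)]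

theorem Matrix.coeff_det_of_natDegree_le {n R : Type*} [Fintype n] [DecidableEq n] [CommRing R]
    (P : Matrix n n R[X]) (d : n → ℕ) (h : ∀ i j, (P i j).natDegree ≤ d j) :
    P.det.coeff (∑ j, d j) = (Matrix.of fun i j => (P i j).coeff (d j)).det := by
  simp only [Matrix.det_apply, finsetSum_coeff, Matrix.of_apply]
  refine Finset.sum_congr rfl fun σ _ => ?_
  rw [Units.smul_def, Units.smul_def, zsmul_eq_mul, zsmul_eq_mul, ← C_eq_intCast, coeff_C_mul,
    coeff_prod_sum_of_natDegree_le _ _ _ fun i _ => h (σ i) i]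

theorem LinearIndependent.update_sub_smul {ι R M : Type*} [DecidableEq ι] [CommRing R]
    [AddCommGroup M] [Module R M] {f : ι → M} (hf : LinearIndependent R f) {j j' : ι}
    (h : j ≠ j') (c : R) : LinearIndependent R (Function.update f j (f j - c • f j')) := by
  refine hf.update j _ ⟨1, one_mem _, Finsupp.single j 1 - Finsupp.single j' c, ?_, ?_⟩
  · simp [h.symm]
  · simp [Finsupp.linearCombination_single]

section ShiftCasoratian

variable {K : Type*} [Field K] {m : ℕ}

theorem Polynomial.degree_sub_smul_lt {p r : K[X]} (hp : p ≠ 0) (hr : r ≠ 0)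
    (hpr : p.natDegree = r.natDegree) :
    (p - (p.leadingCoeff / r.leadingCoeff) • r).degree < p.degree := by
  have hlc : r.leadingCoeff ≠ 0 := leadingCoeff_ne_zero.mpr hr
  have hc : p.leadingCoeff / r.leadingCoeff ≠ 0 := div_ne_zero (leadingCoeff_ne_zero.mpr hp) hlc
  rw [smul_eq_C_mul]
  refine degree_sub_lt_left ?_ hp ?_
  · rw [degree_C_mul hc, degree_eq_natDegree hp, degree_eq_natDegree hr, hpr]
  · rw [leadingCoeff_mul, leadingCoeff_C, div_mul_cancel₀ _ hlc]

def shiftCasoratian (q : K) (f : Fin m → K[X]) : K[X] :=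
  (Matrix.of fun i j : Fin m => (f j).comp (C (q ^ (i : ℕ)) * X)).det

theorem coeff_shiftCasoratian (q : K) (f : Fin m → K[X]) :
    (shiftCasoratian q f).coeff (∑ j, (f j).natDegree) =
      (∏ j, (f j).leadingCoeff) * (Matrix.vandermonde fun j => q ^ (f j).natDegree).det := by
  rw [shiftCasoratian, Matrix.coeff_det_of_natDegree_le _ _ fun i j => ?_,
    ← Matrix.det_transpose (Matrix.vandermonde _), ← Matrix.det_mul_row]
  · congr 1
    refine Matrix.ext fun i j => ?_
    simp only [Matrix.of_apply, Matrix.transpose_apply, Matrix.vandermonde_apply,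
      comp_C_mul_X_coeff, coeff_natDegree]
    ring
  · exact natDegree_le_iff_coeff_eq_zero.mpr fun k hk => by
      rw [Matrix.of_apply, comp_C_mul_X_coeff, coeff_eq_zero_of_natDegree_lt (by exact_mod_cast hk),
        zero_mul]

theorem shiftCasoratian_ne_zero_of_injective_natDegree {q : K}
    (hq : Function.Injective (q ^ · : ℕ → K)) {f : Fin m → K[X]} (hf : ∀ j, f j ≠ 0)
    (hd : Function.Injective fun j => (f j).natDegree) : shiftCasoratian q f ≠ 0 := by
  have hcoeff : (shiftCasoratian q f).coeff (∑ j, (f j).natDegree) ≠ 0 := by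
    rw [coeff_shiftCasoratian]
    exact mul_ne_zero (Finset.prod_ne_zero_iff.mpr fun j _ => leadingCoeff_ne_zero.mpr (hf j))
      (Matrix.det_vandermonde_ne_zero_iff.mpr (hq.comp hd))
  exact fun h => hcoeff (by rw [h, coeff_zero])

theorem shiftCasoratian_update_sub_smul (q : K) (f : Fin m → K[X]) {j j' : Fin m} (h : j ≠ j')
    (c : K) : shiftCasoratian q (Function.update f j (f j - c • f j')) = shiftCasoratian q f := by
  rw [shiftCasoratian, shiftCasoratian, ← Matrix.det_updateCol_add_smul_self
    (Matrix.of fun i k : Fin m => (f k).comp (C (q ^ (i : ℕ)) * X)) h (-C c)]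
  congr 1
  refine Matrix.ext fun i k => ?_
  rcases eq_or_ne k j with rfl | hk
  · simp [smul_eq_C_mul, sub_eq_add_neg]
  · simp [hk]

theorem shiftCasoratian_ne_zero {q : K} (hq : Function.Injective (q ^ · : ℕ → K))
    {f : Fin m → K[X]} (hf : LinearIndependent K f) : shiftCasoratian q f ≠ 0 := by
  induction hn : ∑ j, (f j).natDegree using Nat.strong_induction_on generalizing f with
  | _ n ih =>
  by_cases hd : Function.Injective fun j => (f j).natDegree
  · exact shiftCasoratian_ne_zero_of_injective_natDegree hq hf.ne_zero hd
  obtain ⟨j, j', hdeg, hjj'⟩ := Function.not_injective_iff.mp hd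
  set c := (f j).leadingCoeff / (f j').leadingCoeff
  set g := Function.update f j (f j - c • f j')
  have hg : LinearIndependent K g := hf.update_sub_smul hjj' c
  have hgj : (g j).natDegree < (f j).natDegree := by
    refine natDegree_lt_natDegree (hg.ne_zero j) ?_
    simpa [g] using degree_sub_smul_lt (hf.ne_zero j) (hf.ne_zero j') hdeg
  have hsum : ∑ k, (g k).natDegree < n := by
    rw [← hn]
    refine Finset.sum_lt_sum (fun k _ => ?_) ⟨j, Finset.mem_univ j, hgj⟩
    rcases eq_or_ne k j with rfl | hk
    · exact hgj.le
    · simp [g, hk]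
  rw [← shiftCasoratian_update_sub_smul q f hjj' c]
  exact ih _ hsum hg rfl

theorem shiftCasoratian_eq_zero_of_not_linearIndependent (q : K) {f : Fin m → K[X]}
    (hf : ¬ LinearIndependent K f) : shiftCasoratian q f = 0 := by
  obtain ⟨g, hg, j, hj⟩ := Fintype.not_linearIndependent_iff.mp hf
  rw [shiftCasoratian, ← Matrix.exists_mulVec_eq_zero_iff]
  refine ⟨fun j => C (g j), fun h => hj (C_eq_zero.mp (congrFun h j)), funext fun i => ?_⟩
  have := congrArg (fun p => p.comp (C (q ^ (i : ℕ)) * X)) hg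
  simpa [Matrix.mulVec, dotProduct, smul_eq_C_mul, mul_comm] using this

theorem shiftCasoratian_eq_zero_iff {q : K} (hq : Function.Injective (q ^ · : ℕ → K))
    (f : Fin m → K[X]) : shiftCasoratian q f = 0 ↔ ¬ LinearIndependent K f :=
  ⟨fun h hf => shiftCasoratian_ne_zero hq hf h,
    shiftCasoratian_eq_zero_of_not_linearIndependent q⟩

theorem eval_shiftCasoratian (q : K) (f : Fin m → K[X]) (z : K) :
    (shiftCasoratian q f).eval z =
      (Matrix.of fun i j : Fin m => (f j).eval (q ^ (i : ℕ) * z)).det := by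
  rw [shiftCasoratian, ← coe_evalRingHom, RingHom.map_det]
  congr 1
  refine Matrix.ext fun i j => ?_
  simp [eval_comp]

end ShiftCasoratian

def qDiffCoeff (q : ℂ) : ℕ → ℕ → ℂ → ℂ
  | 0, 0, _ => 1
  | 0, _ + 1, _ => 0
  | i + 1, 0, z => -qDiffCoeff q i 0 z / (q * z - z)
  | i + 1, k + 1, z => (qDiffCoeff q i k (q * z) - qDiffCoeff q i (k + 1) z) / (q * z - z)

theorem qDiffCoeff_eq_zero_of_lt (q : ℂ) {i k : ℕ} (h : i < k) (z : ℂ) :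
    qDiffCoeff q i k z = 0 := by
  induction i generalizing k z with
  | zero => obtain ⟨k, rfl⟩ := Nat.exists_eq_add_of_lt h; rfl
  | succ i ih =>
    obtain ⟨k, rfl⟩ := Nat.exists_eq_succ_of_ne_zero (by omega : k ≠ 0)
    simp only [qDiffCoeff, ih (by omega : i < k), ih (by omega : i < k + 1), sub_self, zero_div]

theorem qDiffCoeff_self_ne_zero {q : ℂ} (hq0 : q ≠ 0) (hq1 : q ≠ 1) (i : ℕ) {z : ℂ}
    (hz : z ≠ 0) : qDiffCoeff q i i z ≠ 0 := by
  induction i generalizing z with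
  | zero => exact one_ne_zero
  | succ i ih =>
    rw [qDiffCoeff, qDiffCoeff_eq_zero_of_lt q (by omega : i < i + 1), sub_zero]
    refine div_ne_zero (ih (mul_ne_zero hq0 hz)) ?_
    rw [← sub_one_mul]
    exact mul_ne_zero (sub_ne_zero.mpr hq1) hz

theorem Dqf_iterate_eq_sum (q : ℂ) (g : ℂ → ℂ) {i n : ℕ} (h : i < n) (z : ℂ) :
    (Dqf q)^[i] g z = ∑ k ∈ Finset.range n, qDiffCoeff q i k z * g (q ^ k * z) := by
  induction i generalizing n z with
  | zero =>
    rw [Finset.sum_eq_single_of_mem 0 (Finset.mem_range.mpr h) fun k _ hk => ?_]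
    · simp [qDiffCoeff]
    · rw [qDiffCoeff_eq_zero_of_lt q (Nat.pos_of_ne_zero hk), zero_mul]
  | succ i ih =>
    obtain ⟨n, rfl⟩ := Nat.exists_eq_succ_of_ne_zero (by omega : n ≠ 0)
    rw [Function.iterate_succ_apply', Dqf, ih (by omega : i < n), ih (by omega : i < n + 1),
      Finset.sum_range_succ', Finset.sum_range_succ']
    simp only [qDiffCoeff, pow_succ, pow_zero, one_mul, ← mul_assoc, div_mul_eq_mul_div, sub_mul,
      Finset.sum_sub_distrib, ← Finset.sum_div]
    ring

theorem det_Dqf_iterate {m : ℕ} (q : ℂ) (g : Fin m → ℂ → ℂ) (z : ℂ) :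
    (Matrix.of fun i j : Fin m => (Dqf q)^[(i : ℕ)] (g j) z).det =
      (∏ i : Fin m, qDiffCoeff q i i z) *
        (Matrix.of fun i j : Fin m => g j (q ^ (i : ℕ) * z)).det := by
  have hlower : (Matrix.of fun i k : Fin m => qDiffCoeff q i k z).IsLowerTriangular :=
    fun i k hik => qDiffCoeff_eq_zero_of_lt q (Fin.lt_def.mp hik) z
  have hdiag := Matrix.det_of_isLowerTriangular _ hlower
  simp only [Matrix.of_apply] at hdiag
  rw [← hdiag, ← Matrix.det_mul]
  congr 1
  refine Matrix.ext fun i j => ?_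
  rw [Matrix.of_apply, Dqf_iterate_eq_sum q (g j) i.isLt, ← Fin.sum_univ_eq_sum_range
    (fun k => qDiffCoeff q i k z * g j (q ^ k * z))]
  rfl

/-- The q-Casorati determinant of polynomials vanishes iff they are linearly dependent over ℂ. -/
theorem qCasorati_eq_zero_iff (q : ℂ) (hq0 : q ≠ 0) (habs : ‖q‖ ≠ 1)
    (m : ℕ) (f : Fin m → Polynomial ℂ) :
    (∀ z : ℂ, z ≠ 0 →
        Matrix.det (Matrix.of fun i j : Fin m =>
          ((Dqf q)^[(i : ℕ)] (fun w => (f j).eval w)) z) = 0)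
      ↔ ¬ LinearIndependent ℂ f := by
  have hq : Function.Injective (q ^ · : ℕ → ℂ) := fun a b h =>
    pow_right_injective₀ (norm_pos_iff.mpr hq0) habs (by simpa using congrArg norm h)
  have hq1 : q ≠ 1 := by rintro rfl; simp at habs
  have hfactor : ∀ z ≠ 0, (Matrix.of fun i j : Fin m =>
      ((Dqf q)^[(i : ℕ)] (fun w => (f j).eval w)) z).det = 0 ↔
        (shiftCasoratian q f).eval z = 0 := by
    intro z hz
    have hdiag : ∏ i : Fin m, qDiffCoeff q i i z ≠ 0 :=
      Finset.prod_ne_zero_iff.mpr fun i _ => qDiffCoeff_self_ne_zero hq0 hq1 i hz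
    rw [det_Dqf_iterate, eval_shiftCasoratian, mul_eq_zero, or_iff_right hdiag]
  rw [← shiftCasoratian_eq_zero_iff hq]
  refine ⟨fun h => eq_zero_of_infinite_isRoot _ ?_,
    fun h z hz => by rw [hfactor z hz, h, eval_zero]⟩
  exact (Set.finite_singleton 0).infinite_compl.mono fun z hz => (hfactor z hz).mp (h z hz)
end
end

section
/- Let q ∈ ℂ \ {0} with |q| ≠ 1, n ∈ ℕ, and let a, b, c be polynomials over ℂ, not all constants, such that [a]_q^n, [b]_q^n, [c]_q^n are relatively q-prime and satisfy [a]_q^n + [b]_q^n = [c]_q^n, where [P]_q^n(z) = P(z)P(qz)⋯P(q^{n-1}z). Then n ≤ 2. Moreover, if one of a, b, c is constant, then n ≤ 1. -/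
open Polynomial

noncomputable section

/-!
This is the `q`-Wronskian proof of the `q`-difference Stothers–Mason theorem, specialised to the
Fermat equation. Write `A, B, C` for `[a]_q^n, [b]_q^n, [c]_q^n` and
`W(P, Q) = P(z) Q(qz) - P(qz) Q(z)`. For `n ≥ 2` every zero of `A` lies in a `q`-chain of length
two inside `A`, so the hypotheses make `A, B, C` pairwise coprime, and since `|q| ≠ 1` this forces
`W = W(A, B) ≠ 0`. As `A + B = C`, also `W = W(A, C) = W(C, B)`, so `deg W` is at most each of
`n (deg a + deg b)`, `n (deg a + deg c)`, `n (deg c + deg b)`. On the other hand `z` and the three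
coprime factors `[p]_q^n(z) / p(z) = [p]_q^(n-1)(qz)` divide `W`, so
`1 + (n - 1)(deg a + deg b + deg c) ≤ deg W`. Adding the three bounds gives `n ≤ 2`, and `n ≤ 1`
when one of `a, b, c` is constant.
-/

section Dilation

variable {R : Type*} [CommRing R] [IsDomain R] {q : R}

lemma natDegree_comp_C_mul_X (hq : q ≠ 0) (p : R[X]) :
    (p.comp (C q * X)).natDegree = p.natDegree := by
  rw [natDegree_comp, natDegree_C_mul_X q hq, mul_one]

lemma exists_comp_C_mul_X_eq_C_mul_of_dvd (hq : q ≠ 0) {P : R[X]} (h : P ∣ P.comp (C q * X)) :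
    ∃ c, P.comp (C q * X) = C c * P := by
  obtain ⟨u, hu⟩ := h
  rcases eq_or_ne P 0 with rfl | hP
  · exact ⟨0, by simp⟩
  have hu0 : u ≠ 0 := by
    rintro rfl
    rw [mul_zero, comp_C_mul_X_eq_zero_iff (mem_nonZeroDivisors_of_ne_zero hq)] at hu
    exact hP hu
  have hdeg : u.natDegree = 0 := by
    have := congrArg natDegree hu
    rw [natDegree_comp_C_mul_X hq, natDegree_mul hP hu0] at this
    omega
  refine ⟨u.coeff 0, ?_⟩
  rw [hu, mul_comm, ← eq_C_of_natDegree_eq_zero hdeg]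

lemma eq_pow_natDegree_of_comp_C_mul_X_eq {P : R[X]} {c : R} (hP : P ≠ 0)
    (h : P.comp (C q * X) = C c * P) : c = q ^ P.natDegree := by
  have hcoeff := congrArg (coeff · P.natDegree) h
  simp only [comp_C_mul_X_coeff, coeff_C_mul, coeff_natDegree] at hcoeff
  exact mul_right_cancel₀ (leadingCoeff_ne_zero.mpr hP) (by rw [← hcoeff, mul_comm])

lemma coeff_zero_eq_zero_of_comp_C_mul_X_eq {P : R[X]} {c : R} (hc : c ≠ 1)
    (h : P.comp (C q * X) = C c * P) : P.coeff 0 = 0 := by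
  have hcoeff := congrArg (coeff · 0) h
  simp only [comp_C_mul_X_coeff, coeff_C_mul, pow_zero, mul_one] at hcoeff
  have : (1 - c) * P.coeff 0 = 0 := by linear_combination hcoeff
  exact (mul_eq_zero.mp this).resolve_left (sub_ne_zero.mpr hc.symm)

end Dilation

section QWronskian

variable {R : Type*} [CommRing R] {q : R}

def qWronskian (q : R) (P Q : R[X]) : R[X] := P * Q.comp (C q * X) - P.comp (C q * X) * Q

lemma qWronskian_add_left (P Q S : R[X]) :
    qWronskian q (P + Q) S = qWronskian q P S + qWronskian q Q S := by
  simp only [qWronskian, add_comp]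
  ring

lemma qWronskian_add_right (P Q S : R[X]) :
    qWronskian q P (Q + S) = qWronskian q P Q + qWronskian q P S := by
  simp only [qWronskian, add_comp]
  ring

lemma qWronskian_self_eq_zero (P : R[X]) : qWronskian q P P = 0 := by
  rw [qWronskian, mul_comm, sub_self]

lemma qWronskian_neg_eq (P Q : R[X]) : -qWronskian q P Q = qWronskian q Q P := by
  simp only [qWronskian]
  ring

lemma qWronskian_eq_of_add_eq {P Q S : R[X]} (h : P + Q = S) :
    qWronskian q P S = qWronskian q P Q ∧ qWronskian q S Q = qWronskian q P Q := by
  subst h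
  rw [qWronskian_add_right, qWronskian_add_left, qWronskian_self_eq_zero, qWronskian_self_eq_zero,
    zero_add, add_zero]
  exact ⟨rfl, rfl⟩

lemma natDegree_qWronskian_le [IsDomain R] (hq : q ≠ 0) (P Q : R[X]) :
    (qWronskian q P Q).natDegree ≤ P.natDegree + Q.natDegree :=
  (natDegree_sub_le_of_le (natDegree_mul_le_of_le le_rfl (natDegree_comp_C_mul_X hq Q).le)
    (natDegree_mul_le_of_le (natDegree_comp_C_mul_X hq P).le le_rfl)).trans (max_self _).le

/-- `W(P, Q) = 0` makes `P` and `Q` eigenvectors of `P ↦ P(qz)` with a common eigenvalue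
`q ^ d`; for `d > 0` both then vanish at `0`. -/
lemma qWronskian_ne_zero [IsDomain R] (hinj : Function.Injective (q ^ · : ℕ → R))
    {P Q : R[X]} (hPQ : IsCoprime P Q) (hdeg : 0 < P.natDegree ∨ 0 < Q.natDegree) :
    qWronskian q P Q ≠ 0 := by
  have hq : q ≠ 0 := fun h => by simpa [h] using hinj.ne (by decide : 1 ≠ 2)
  intro hW
  have hP : P ≠ 0 := by
    rintro rfl
    rw [natDegree_zero, natDegree_eq_zero_of_isUnit (isCoprime_zero_left.mp hPQ)] at hdeg
    omega
  have hQ : Q ≠ 0 := by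
    rintro rfl
    rw [natDegree_zero, natDegree_eq_zero_of_isUnit (isCoprime_zero_right.mp hPQ)] at hdeg
    omega
  have heq : P * Q.comp (C q * X) = P.comp (C q * X) * Q := sub_eq_zero.mp hW
  obtain ⟨c, hc⟩ := exists_comp_C_mul_X_eq_C_mul_of_dvd hq
    (hPQ.dvd_of_dvd_mul_right (heq ▸ dvd_mul_right P _))
  have hcQ : Q.comp (C q * X) = C c * Q := by
    refine mul_left_cancel₀ hP ?_
    rw [heq, hc]
    ring
  have hdPQ : P.natDegree = Q.natDegree := hinj <|
    (eq_pow_natDegree_of_comp_C_mul_X_eq hP hc).symm.trans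
      (eq_pow_natDegree_of_comp_C_mul_X_eq hQ hcQ)
  have hc1 : c ≠ 1 := by
    rw [eq_pow_natDegree_of_comp_C_mul_X_eq hP hc, ← pow_zero q]
    exact hinj.ne (by omega)
  refine not_isUnit_X (hPQ.isUnit_of_dvd' ?_ ?_) <;> rw [X_dvd_iff]
  · exact coeff_zero_eq_zero_of_comp_C_mul_X_eq hc1 hc
  · exact coeff_zero_eq_zero_of_comp_C_mul_X_eq hc1 hcQ

end QWronskian

lemma Irreducible.mul_mul_mul_dvd_of_isCoprime {R : Type*} [CommRing R] [IsBezout R]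
    {p P Q S W : R} (hp : Irreducible p) (hPQ : IsCoprime P Q) (hPS : IsCoprime P S)
    (hQS : IsCoprime Q S)
    (hP : p * P ∣ W) (hQ : p * Q ∣ W) (hS : p * S ∣ W) : p * (P * Q * S) ∣ W := by
  have key : ∀ {P Q S : R}, IsCoprime P Q → IsCoprime P S → IsCoprime Q S → ¬p ∣ Q → ¬p ∣ S →
      p * P ∣ W → Q ∣ W → S ∣ W → p * (P * Q * S) ∣ W := by
    intro P Q S hPQ hPS hQS hpQ hpS hP hQ hS
    have hpQ' := (hp.coprime_iff_not_dvd).mpr hpQ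
    have hpS' := (hp.coprime_iff_not_dvd).mpr hpS
    rw [← mul_assoc, ← mul_assoc]
    exact ((hpS'.mul_left hPS).mul_left hQS).mul_dvd ((hpQ'.mul_left hPQ).mul_dvd hP hQ) hS
  have hcop : ∀ {P Q : R}, IsCoprime P Q → p ∣ P → ¬p ∣ Q := fun h hP hQ =>
    hp.not_isUnit (h.isUnit_of_dvd' hP hQ)
  by_cases hpQ : p ∣ Q
  · have := key hPQ.symm hQS hPS (hcop hPQ.symm hpQ) (hcop hQS hpQ) hQ (dvd_of_mul_left_dvd hP)
      (dvd_of_mul_left_dvd hS)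
    rwa [show Q * P * S = P * Q * S by ring] at this
  by_cases hpS : p ∣ S
  · have := key hPS.symm hQS.symm hPQ (hcop hPS.symm hpS) (hcop hQS.symm hpS) hS
      (dvd_of_mul_left_dvd hP) (dvd_of_mul_left_dvd hQ)
    rwa [show S * P * Q = P * Q * S by ring] at this
  exact key hPQ hPS hQS hpQ hpS hP (dvd_of_mul_left_dvd hQ) (dvd_of_mul_left_dvd hS)

lemma pow_right_injective_of_norm_ne_one {𝕜 : Type*} [NormedDivisionRing 𝕜] {q : 𝕜}
    (hq : q ≠ 0) (habs : ‖q‖ ≠ 1) :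
    Function.Injective (q ^ · : ℕ → 𝕜) := fun i j hij =>
  pow_right_injective₀ (norm_pos_iff.mpr hq) habs (by simpa using congrArg norm hij)

section QShiftPow

variable {q : ℂ}

lemma qShiftPow_succ (q : ℂ) (p : ℂ[X]) (n : ℕ) :
    qShiftPow q p (n + 1) = p * (qShiftPow q p n).comp (C q * X) := by
  rw [qShiftPow, qShiftPow, Finset.prod_range_succ', prod_comp, mul_comm]
  simp only [pow_zero, C_1, one_mul, comp_X, comp_assoc, mul_comp, C_comp, X_comp, ← mul_assoc,
    ← C_mul, pow_succ]

lemma qShiftPow_succ' (q : ℂ) (p : ℂ[X]) (n : ℕ) :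
    qShiftPow q p (n + 1) = qShiftPow q p n * p.comp (C (q ^ n) * X) :=
  Finset.prod_range_succ _ _

lemma natDegree_qShiftPow (hq : q ≠ 0) (p : ℂ[X]) (n : ℕ) :
    (qShiftPow q p n).natDegree = n * p.natDegree := by
  induction n with
  | zero => simp [qShiftPow]
  | succ n ih =>
    rcases eq_or_ne p 0 with rfl | hp
    · simp [qShiftPow_succ']
    have hcomp : ∀ i, p.comp (C (q ^ i) * X) ≠ 0 := fun i =>
      (comp_C_mul_X_eq_zero_iff (mem_nonZeroDivisors_of_ne_zero (pow_ne_zero i hq))).not.mpr hp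
    have hprod : qShiftPow q p n ≠ 0 := Finset.prod_ne_zero_iff.mpr fun i _ => hcomp i
    rw [qShiftPow_succ', natDegree_mul hprod (hcomp n), ih,
      natDegree_comp_C_mul_X (pow_ne_zero n hq)]
    ring

lemma eval_qShiftPow (q : ℂ) (p : ℂ[X]) (n : ℕ) (w : ℂ) :
    (qShiftPow q p n).eval w = ∏ i ∈ Finset.range n, p.eval (q ^ i * w) := by
  simp [qShiftPow, eval_prod, eval_comp]

lemma eval_qShiftPow_eq_zero_iff {p : ℂ[X]} {n : ℕ} {w : ℂ} :
    (qShiftPow q p n).eval w = 0 ↔ ∃ i < n, p.eval (q ^ i * w) = 0 := by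
  simp [eval_qShiftPow, Finset.prod_eq_zero_iff]

/-- Shift the index `i < n` of a vanishing factor `p(q^i w)` by one inside `[0, n)`. -/
lemma eval_qShiftPow_neighbor_eq_zero (hq : q ≠ 0) {p : ℂ[X]} {n : ℕ} (hn : 2 ≤ n) {w : ℂ}
    (h : (qShiftPow q p n).eval w = 0) :
    (qShiftPow q p n).eval (q⁻¹ * w) = 0 ∨ (qShiftPow q p n).eval (q * w) = 0 := by
  obtain ⟨i, hi, hpi⟩ := eval_qShiftPow_eq_zero_iff.mp h
  simp only [eval_qShiftPow_eq_zero_iff]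
  rcases Nat.lt_or_ge (i + 1) n with hi1 | hi1
  · exact Or.inl ⟨i + 1, hi1, by rwa [pow_succ, mul_assoc, mul_inv_cancel_left₀ hq]⟩
  · refine Or.inr ⟨i - 1, by omega, ?_⟩
    rwa [← mul_assoc, ← pow_succ, Nat.sub_add_cancel (by omega)]

end QShiftPow

section QDivisor

variable {q : ℂ}

lemma HasCommonQDivisor.symm {f g : ℂ[X]} (h : HasCommonQDivisor q f g) :
    HasCommonQDivisor q g f := by
  obtain ⟨z₀, z₁, z₂, m, n, F, G, hm, hn, hf, hg, hz₀, hfg⟩ := h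
  refine ⟨z₀, z₂, z₁, n, m, G, F, hn, hm, hg, hf, hz₀.symm, ?_⟩
  rw [mul_comm, hfg, add_comm m, mul_comm F]

/-- Zeros of `f` at `z` and of `g` at `q * z` form the `q`-chain `(X - z) (X - q z)`. -/
lemma hasCommonQDivisor_of_eval_eq_zero {f g : ℂ[X]} {z : ℂ} (hf : f.eval z = 0)
    (hg : g.eval (q * z) = 0) : HasCommonQDivisor q f g := by
  obtain ⟨F, hF⟩ := dvd_iff_isRoot.mpr hf
  obtain ⟨G, hG⟩ := dvd_iff_isRoot.mpr hg
  refine ⟨z, z, q * z, 1, 1, F, G, le_rfl, le_rfl, ?_, ?_, Or.inl rfl, ?_⟩ <;>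
    simp only [qPow, Finset.prod_range_succ, Finset.range_zero, Finset.prod_empty, pow_zero,
      pow_one, one_mul, hF, hG]
  ring

lemma isCoprime_qShiftPow_of_not_hasCommonQDivisor (hq : q ≠ 0) {n : ℕ} (hn : 2 ≤ n)
    {f g : ℂ[X]} (h : ¬HasCommonQDivisor q (qShiftPow q f n) (qShiftPow q g n)) :
    IsCoprime (qShiftPow q f n) (qShiftPow q g n) := by
  refine (isCoprime_iff_aeval_ne_zero_of_isAlgClosed ℂ ℂ _ _).mpr fun w => ?_
  simp only [coe_aeval_eq_eval, ← not_and_or]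
  rintro ⟨hfw, hgw⟩
  rcases eval_qShiftPow_neighbor_eq_zero hq hn hfw with hf | hf
  · exact h (hasCommonQDivisor_of_eval_eq_zero hf (by rwa [mul_inv_cancel_left₀ hq]))
  · exact h (hasCommonQDivisor_of_eval_eq_zero hgw hf).symm

end QDivisor

/-- Writing `[p]_q^(m+1) = p · σ[p]_q^m` and `σ[p]_q^(m+1) = σ[p]_q^m · p(q^(m+1) z)` with
`σ P = P(qz)`, the Wronskian is `σ[p]_q^m` times a polynomial vanishing at `0`. -/
lemma X_mul_dvd_qWronskian_qShiftPow_left (q : ℂ) (p Q : ℂ[X]) (m : ℕ) :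
    X * (qShiftPow q p m).comp (C q * X) ∣ qWronskian q (qShiftPow q p (m + 1)) Q := by
  have hW : qWronskian q (qShiftPow q p (m + 1)) Q = (qShiftPow q p m).comp (C q * X) *
      (p * Q.comp (C q * X) - (p.comp (C (q ^ m) * X)).comp (C q * X) * Q) := by
    rw [qWronskian, qShiftPow_succ', mul_comp, ← qShiftPow_succ', qShiftPow_succ]
    ring
  rw [hW, mul_comm X]
  refine mul_dvd_mul_left _ (X_dvd_iff.mpr ?_)
  simp [coeff_zero_eq_eval_zero, eval_comp]

lemma X_mul_dvd_qWronskian_qShiftPow_right (q : ℂ) (P p : ℂ[X]) (m : ℕ) :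
    X * (qShiftPow q p m).comp (C q * X) ∣ qWronskian q P (qShiftPow q p (m + 1)) := by
  rw [← qWronskian_neg_eq, dvd_neg]
  exact X_mul_dvd_qWronskian_qShiftPow_left q p P m

lemma IsCoprime.comp_qShiftPow {q : ℂ} {f g : ℂ[X]} {m : ℕ}
    (h : IsCoprime (qShiftPow q f (m + 1)) (qShiftPow q g (m + 1))) :
    IsCoprime ((qShiftPow q f m).comp (C q * X)) ((qShiftPow q g m).comp (C q * X)) := by
  rw [qShiftPow_succ, qShiftPow_succ] at h
  exact h.of_mul_left_right.of_mul_right_right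

lemma le_two_of_lt_mul_add {m x y z : ℕ} (hxy : m * (x + y + z) < (m + 1) * (x + y))
    (hxz : m * (x + y + z) < (m + 1) * (x + z)) (hzy : m * (x + y + z) < (m + 1) * (z + y)) :
    m + 1 ≤ 2 ∧ (x = 0 ∨ y = 0 ∨ z = 0 → m + 1 ≤ 1) := by
  refine ⟨by nlinarith, ?_⟩
  rintro (rfl | rfl | rfl) <;> nlinarith

lemma one_add_mul_le_natDegree_qWronskian {q : ℂ} (hq : q ≠ 0) {a b c : ℂ[X]} {m : ℕ}
    (hAB : IsCoprime (qShiftPow q a (m + 1)) (qShiftPow q b (m + 1)))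
    (hAC : IsCoprime (qShiftPow q a (m + 1)) (qShiftPow q c (m + 1)))
    (hBC : IsCoprime (qShiftPow q b (m + 1)) (qShiftPow q c (m + 1)))
    (hWAC : qWronskian q (qShiftPow q a (m + 1)) (qShiftPow q c (m + 1)) =
      qWronskian q (qShiftPow q a (m + 1)) (qShiftPow q b (m + 1)))
    (hW : qWronskian q (qShiftPow q a (m + 1)) (qShiftPow q b (m + 1)) ≠ 0) :
    1 + m * (a.natDegree + b.natDegree + c.natDegree) ≤
      (qWronskian q (qShiftPow q a (m + 1)) (qShiftPow q b (m + 1))).natDegree := by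
  have hdvd := irreducible_X.mul_mul_mul_dvd_of_isCoprime hAB.comp_qShiftPow hAC.comp_qShiftPow
    hBC.comp_qShiftPow (X_mul_dvd_qWronskian_qShiftPow_left q a _ m)
    (X_mul_dvd_qWronskian_qShiftPow_right q _ b m)
    (hWAC ▸ X_mul_dvd_qWronskian_qShiftPow_right q _ c m)
  obtain ⟨hX, ⟨ha, hb⟩, hc⟩ := by
    simpa only [mul_ne_zero_iff] using ne_zero_of_dvd_ne_zero hW hdvd
  have hlow := natDegree_le_of_dvd hdvd hW
  rw [natDegree_mul hX (mul_ne_zero (mul_ne_zero ha hb) hc),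
    natDegree_mul (mul_ne_zero ha hb) hc, natDegree_mul ha hb, natDegree_X] at hlow
  simp only [natDegree_comp_C_mul_X hq, natDegree_qShiftPow hq] at hlow
  linarith

/-- q-difference Fermat equation [a]_q^n + [b]_q^n = [c]_q^n forces n ≤ 2. -/
theorem q_fermat_three (q : ℂ) (hq0 : q ≠ 0) (habs : ‖q‖ ≠ 1) (n : ℕ)
    (a b c : Polynomial ℂ)
    (hconst : ¬ (a.natDegree = 0 ∧ b.natDegree = 0 ∧ c.natDegree = 0))
    (hab : ¬ HasCommonQDivisor q (qShiftPow q a n) (qShiftPow q b n))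
    (hac : ¬ HasCommonQDivisor q (qShiftPow q a n) (qShiftPow q c n))
    (hbc : ¬ HasCommonQDivisor q (qShiftPow q b n) (qShiftPow q c n))
    (hsum : qShiftPow q a n + qShiftPow q b n = qShiftPow q c n) :
    n ≤ 2 ∧ ((a.natDegree = 0 ∨ b.natDegree = 0 ∨ c.natDegree = 0) → n ≤ 1) := by
  rcases Nat.lt_or_ge n 2 with hn | hn
  · exact ⟨by omega, fun _ => by omega⟩
  have hAB := isCoprime_qShiftPow_of_not_hasCommonQDivisor hq0 hn hab
  have hAC := isCoprime_qShiftPow_of_not_hasCommonQDivisor hq0 hn hac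
  have hBC := isCoprime_qShiftPow_of_not_hasCommonQDivisor hq0 hn hbc
  obtain ⟨m, rfl⟩ : ∃ m, n = m + 1 := ⟨n - 1, by omega⟩
  obtain ⟨hWAC, hWCB⟩ := qWronskian_eq_of_add_eq (q := q) hsum
  have hW : qWronskian q (qShiftPow q a (m + 1)) (qShiftPow q b (m + 1)) ≠ 0 := by
    refine qWronskian_ne_zero (pow_right_injective_of_norm_ne_one hq0 habs) hAB ?_
    contrapose! hconst
    have hC := (natDegree_add_le _ _).trans (max_le hconst.1 hconst.2)
    simp only [hsum, natDegree_qShiftPow hq0, nonpos_iff_eq_zero, mul_eq_zero,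
      Nat.add_one_ne_zero, false_or] at hconst hC
    exact ⟨hconst.1, hconst.2, hC⟩
  have hlow := one_add_mul_le_natDegree_qWronskian hq0 hAB hAC hBC hWAC hW
  have hupAB := natDegree_qWronskian_le hq0 (qShiftPow q a (m + 1)) (qShiftPow q b (m + 1))
  have hupAC := hWAC ▸ natDegree_qWronskian_le hq0 (qShiftPow q a (m + 1)) (qShiftPow q c (m + 1))
  have hupCB := hWCB ▸ natDegree_qWronskian_le hq0 (qShiftPow q c (m + 1)) (qShiftPow q b (m + 1))
  simp only [natDegree_qShiftPow hq0, ← mul_add] at hupAB hupAC hupCB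
  exact le_two_of_lt_mul_add (by omega) (by omega) (by omega)
end
end
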